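/- arXiv:1911.10616 — 3 statements merged into one kernel-verified Lean document; each statement's English description precedes it below -/
import Mathlib

section
/- Let G be a finite simple graph and u a vertex, let DM(u,λ4) denote the number of (not necessarily induced) 3-paths (paths with 3 edges) having u as an endpoint, let DM(u,λ1) = Σ_{v∈N(u)} (d(v)−1) count the 2-paths with u as an endpoint, and let T(u) be the number of triangles containing u. Then DM(u,λ4) = Σ_{v∈N(u)} DM(v,λ1) − 2·(d(u) choose 2) − 2·T(u). -/
open Finset

private lemma two_choose_two (n : ℕ) : (2 * n.choose 2 : ℤ) = n * n - n := by
  induction n with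
  | zero => simp
  | succ n ih =>
    rw [Nat.choose_succ_succ, Nat.choose_one_right]
    push_cast at ih ⊢
    ring_nf at ih ⊢
    linarith

/-- `DM(u,λ4) = Σ_{v∈N(u)} DM(v,λ1) − 2·C(d(u),2) − 2·T(u)`:
the number of 3-edge paths starting at `u` expressed via 2-edge path counts
at the neighbors of `u`, wedges centered at `u`, and triangles at `u`. -/
theorem three_path_endpoint_count {V : Type*} [Fintype V] [DecidableEq V]
    (G : SimpleGraph V) [DecidableRel G.Adj] (u : V) :
    -- DM(·,λ1): 2-edge paths a-p₁-p₂ with distinct vertices, starting at a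
    let DM1 : V → ℕ := fun a =>
      ((Finset.univ ×ˢ Finset.univ : Finset (V × V)).filter
        (fun p => G.Adj a p.1 ∧ G.Adj p.1 p.2 ∧ p.2 ≠ a)).card
    -- DM(u,λ4): 3-edge paths u-v-w-x with four distinct vertices
    let DM4 : ℕ :=
      ((Finset.univ ×ˢ Finset.univ ×ˢ Finset.univ : Finset (V × V × V)).filter
        (fun p => G.Adj u p.1 ∧ G.Adj p.1 p.2.1 ∧ G.Adj p.2.1 p.2.2 ∧
          p.2.1 ≠ u ∧ p.2.2 ≠ u ∧ p.2.2 ≠ p.1)).card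
    -- T(u): triangles containing u
    let T : ℕ := (((G.neighborFinset u).powersetCard 2).filter
        (fun s => ∀ a ∈ s, ∀ b ∈ s, a ≠ b → G.Adj a b)).card
    (DM4 : ℤ) = (∑ v ∈ G.neighborFinset u, (DM1 v : ℤ))
      - 2 * ((G.degree u).choose 2 : ℤ) - 2 * (T : ℤ) := by
  intro DM1 DM4 T
  classical
  set S : Finset (V × V × V) :=
    (Finset.univ ×ˢ Finset.univ ×ˢ Finset.univ : Finset (V × V × V)).filter
      (fun p => G.Adj u p.1 ∧ G.Adj p.1 p.2.1 ∧ G.Adj p.2.1 p.2.2 ∧ p.2.2 ≠ p.1) with hS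
  -- Step 1 : sum of DM1 over neighbors equals card S
  have hsum : ∑ v ∈ G.neighborFinset u, DM1 v = S.card := by
    rw [Finset.card_eq_sum_card_fiberwise (f := fun p : V × V × V => p.1)
      (t := G.neighborFinset u) (by
        intro p hp
        simp only [mem_coe, hS, mem_filter] at hp
        simp [hp.2.1])]
    refine Finset.sum_congr rfl ?_
    intro v hv
    have huv : G.Adj u v := (SimpleGraph.mem_neighborFinset G u v).1 hv
    refine Finset.card_nbij' (fun q => (v, q)) (fun p => p.2) ?_ ?_ ?_ ?_
    · intro q hq
      simp only [mem_coe, mem_filter, mem_product, mem_univ, true_and, and_true] at hq ⊢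
      simp only [mem_coe, hS, mem_filter, mem_product, mem_univ, true_and, and_true]
      exact ⟨huv, hq⟩
    · intro p hp
      simp only [mem_coe, hS, mem_filter, mem_product, mem_univ, true_and, and_true] at hp
      simp only [mem_coe, mem_filter, mem_product, mem_univ, true_and, and_true]
      obtain ⟨⟨h1, h2, h3, h4⟩, h5⟩ := hp
      subst h5
      exact ⟨h2, h3, h4⟩
    · intro q hq; rfl
    · intro p hp
      simp only [mem_coe, hS, mem_filter, mem_product, mem_univ, true_and, and_true] at hp
      ext <;> simp [hp.2]
  -- Parts of S
  set A : Finset (V × V × V) := S.filter (fun p => p.2.1 ≠ u ∧ p.2.2 ≠ u) with hA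
  set B : Finset (V × V × V) := S.filter (fun p => p.2.1 = u) with hB
  set C : Finset (V × V × V) := S.filter (fun p => p.2.1 ≠ u ∧ p.2.2 = u) with hC
  have hsplit : S.card = A.card + (B.card + C.card) := by
    rw [← Finset.card_filter_add_card_filter_not
      (s := S) (p := fun p => p.2.1 ≠ u ∧ p.2.2 ≠ u)]
    congr 1
    have : S.filter (fun p => ¬(p.2.1 ≠ u ∧ p.2.2 ≠ u)) = B ∪ C := by
      ext p
      simp only [hB, hC, mem_filter, mem_union]
      tauto
    rw [this, Finset.card_union_of_disjoint]
    rw [Finset.disjoint_filter]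
    intro p _ hp
    simp [hp]
  -- A = DM4 set
  have hAcard : A.card = DM4 := by
    congr 1
    simp only [hA, hS, Finset.filter_filter]
    apply Finset.filter_congr
    intro p _
    constructor
    · rintro ⟨⟨h1, h2, h3, h4⟩, h5, h6⟩; exact ⟨h1, h2, h3, h5, h6, h4⟩
    · rintro ⟨h1, h2, h3, h4, h5, h6⟩; exact ⟨⟨h1, h2, h3, h6⟩, h4, h5⟩
  -- card B
  have hBcard : (B.card : ℤ) = 2 * ((G.degree u).choose 2 : ℤ) := by
    have hcb : B.card = (G.neighborFinset u).offDiag.card := by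
      refine Finset.card_nbij' (fun p => (p.1, p.2.2)) (fun q => (q.1, u, q.2)) ?_ ?_ ?_ ?_
      · intro p hp
        simp only [mem_coe, hB, hS, mem_filter, mem_product, mem_univ, true_and, and_true] at hp
        obtain ⟨⟨h1, h2, h3, h4⟩, h5⟩ := hp
        subst h5
        simp only [mem_coe, mem_offDiag, SimpleGraph.mem_neighborFinset]
        exact ⟨h1, h3, fun h => h4 h.symm⟩
      · intro q hq
        simp only [mem_coe, mem_offDiag, SimpleGraph.mem_neighborFinset] at hq
        simp only [mem_coe, hB, hS, mem_filter, mem_product, mem_univ, true_and, and_true]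
        exact ⟨hq.1, hq.1.symm, hq.2.1, fun h => hq.2.2 h.symm⟩
      · intro p hp
        simp only [mem_coe, hB, mem_filter] at hp
        ext <;> simp [hp.2]
      · intro q hq; rfl
    rw [hcb, Finset.offDiag_card, SimpleGraph.card_neighborFinset_eq_degree]
    have h2 := two_choose_two (G.degree u)
    have hle : G.degree u ≤ G.degree u * G.degree u := by
      rcases Nat.eq_zero_or_pos (G.degree u) with h | h
      · simp [h]
      · exact Nat.le_mul_of_pos_left _ h
    push_cast [hle]
    linarith
  -- card C
  set P : Finset (V × V) := Finset.univ.filter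
      (fun q : V × V => G.Adj u q.1 ∧ G.Adj u q.2 ∧ G.Adj q.1 q.2) with hP
  have hCP : C.card = P.card := by
    refine Finset.card_nbij' (fun p => (p.1, p.2.1)) (fun q => (q.1, q.2, u)) ?_ ?_ ?_ ?_
    · intro p hp
      simp only [mem_coe, hC, hS, mem_filter, mem_product, mem_univ, true_and, and_true] at hp
      obtain ⟨⟨h1, h2, h3, h4⟩, h5, h6⟩ := hp
      simp only [mem_coe, hP, mem_filter, mem_univ, true_and]
      exact ⟨h1, (h6 ▸ h3).symm, h2⟩
    · intro q hq
      simp only [mem_coe, hP, mem_filter, mem_univ, true_and] at hq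
      simp only [mem_coe, hC, hS, mem_filter, mem_product, mem_univ, true_and, and_true]
      exact ⟨⟨hq.1, hq.2.2, hq.2.1.symm, G.ne_of_adj hq.1⟩,
        fun h => (G.ne_of_adj hq.2.1) h.symm⟩
    · intro p hp
      simp only [mem_coe, hC, mem_filter] at hp
      ext <;> simp [hp.2.2]
    · intro q hq; rfl
  have hPcard : P.card = 2 * T := by
    set Tset := ((G.neighborFinset u).powersetCard 2).filter
        (fun s => ∀ a ∈ s, ∀ b ∈ s, a ≠ b → G.Adj a b) with hTset
    rw [Finset.card_eq_sum_card_fiberwise (f := fun q : V × V => ({q.1, q.2} : Finset V))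
      (t := Tset) (by
        intro q hq
        simp only [mem_coe, hP, mem_filter, mem_univ, true_and] at hq
        obtain ⟨h1, h2, h3⟩ := hq
        have hne : q.1 ≠ q.2 := G.ne_of_adj h3
        simp only [mem_coe, hTset, mem_filter, mem_powersetCard]
        refine ⟨⟨?_, Finset.card_pair hne⟩, ?_⟩
        · intro x hx
          simp only [mem_insert, mem_singleton] at hx
          rcases hx with h | h <;> subst h <;>
            simp [SimpleGraph.mem_neighborFinset, h1, h2]
        · intro a ha b hb hab
          simp only [mem_insert, mem_singleton] at ha hb
          rcases ha with rfl | rfl <;> rcases hb with rfl | rfl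
          · exact absurd rfl hab
          · exact h3
          · exact h3.symm
          · exact absurd rfl hab)]
    rw [show (2 * T) = ∑ _s ∈ Tset, 2 by
      rw [Finset.sum_const, smul_eq_mul, mul_comm]]
    refine Finset.sum_congr rfl ?_
    intro s hs
    simp only [hTset, mem_filter, mem_powersetCard] at hs
    obtain ⟨⟨hsub, hcard⟩, hadj⟩ := hs
    obtain ⟨a, b, hab, rfl⟩ := Finset.card_eq_two.1 hcard
    have hua : G.Adj u a := by
      rw [← SimpleGraph.mem_neighborFinset]; exact hsub (by simp)
    have hub : G.Adj u b := by
      rw [← SimpleGraph.mem_neighborFinset]; exact hsub (by simp)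
    have hab' : G.Adj a b := hadj a (by simp) b (by simp) hab
    have hfib : P.filter (fun q => ({q.1, q.2} : Finset V) = {a, b})
        = {(a, b), (b, a)} := by
      ext ⟨x, y⟩
      simp only [hP, mem_filter, mem_univ, true_and, mem_insert, mem_singleton,
        Prod.mk.injEq]
      constructor
      · rintro ⟨⟨h1, h2, h3⟩, hxy⟩
        have hx : x ∈ ({a, b} : Finset V) := hxy ▸ (by simp)
        have hy : y ∈ ({a, b} : Finset V) := hxy ▸ (by simp)
        simp only [mem_insert, mem_singleton] at hx hy
        have hne : x ≠ y := G.ne_of_adj h3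
        rcases hx with rfl | rfl <;> rcases hy with rfl | rfl <;> tauto
      · rintro (⟨rfl, rfl⟩ | ⟨rfl, rfl⟩)
        · exact ⟨⟨hua, hub, hab'⟩, rfl⟩
        · exact ⟨⟨hub, hua, hab'.symm⟩, by rw [Finset.pair_comm]⟩
    rw [hfib, Finset.card_insert_of_notMem (by simp [hab, Ne.symm hab]),
      Finset.card_singleton]
  -- assemble
  have hfinal : (S.card : ℤ) = DM4 + 2 * ((G.degree u).choose 2 : ℤ) + 2 * T := by
    have := hsplit
    zify at this
    rw [this, hAcard, hBcard]
    have : (C.card : ℤ) = 2 * T := by rw [hCP, hPcard]; push_cast; ring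
    rw [this]
    ring
  have hsum' : (∑ v ∈ G.neighborFinset u, (DM1 v : ℤ)) = (S.card : ℤ) := by
    rw [← hsum]; push_cast; ring
  rw [hsum', hfinal]
  ring
end

section
/- Let G be a finite simple graph and u a vertex. The number of non-induced 3-paths v0-v1-v2-v3 (4 distinct vertices) with u = v1 (second vertex) equals (Σ_{w∈N(u)}(d(w)−1))·(d(u)−1) − 2·T(u), where T(u) is the number of triangles containing u. -/
/-!
Count the non-backtracking walks `a - u - b - c` (`a ≠ b`, `c ≠ u`): for each neighbour `b` of `u`
there are `(d(u) - 1)(d(b) - 1)` choices of `a` and `c`. Such a walk is a path unless `a = c`, and the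
walks with `a = c` correspond to ordered adjacent pairs `(b, a)` of neighbours of `u`, i.e. to the
triangles through `u`, each counted twice.
-/

open Finset SimpleGraph

namespace SimpleGraph

variable {V : Type*} [DecidableEq V] (G : SimpleGraph V) [DecidableRel G.Adj]

theorem card_filter_adj_product_eq_two_mul (s : Finset V) :
    #((s ×ˢ s).filter fun p => G.Adj p.1 p.2) =
      2 * #((s.powersetCard 2).filter fun t => ∀ a ∈ t, ∀ b ∈ t, a ≠ b → G.Adj a b) := by
  rw [card_eq_sum_card_fiberwise (f := fun p : V × V => ({p.1, p.2} : Finset V))]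
  · rw [mul_comm, ← smul_eq_mul, ← sum_const]
    refine sum_congr rfl fun t ht => ?_
    simp only [mem_filter, mem_powersetCard] at ht
    obtain ⟨⟨hts, ht2⟩, hclique⟩ := ht
    obtain ⟨x, y, hxy, rfl⟩ := card_eq_two.mp ht2
    have hfiber : ((s ×ˢ s).filter fun p => G.Adj p.1 p.2).filter
        (fun p => ({p.1, p.2} : Finset V) = {x, y}) = ({x, y} : Finset V).offDiag := by
      ext ⟨a, b⟩
      simp only [mem_filter, mem_product, mem_offDiag]
      constructor
      · rintro ⟨⟨-, hadj⟩, hab⟩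
        exact ⟨hab ▸ mem_insert_self a {b}, hab ▸ mem_insert_of_mem (mem_singleton_self b), hadj.ne⟩
      · rintro ⟨ha, hb, hab⟩
        refine ⟨⟨⟨hts ha, hts hb⟩, hclique a ha b hb hab⟩, ?_⟩
        exact eq_of_subset_of_card_le (insert_subset ha (singleton_subset_iff.mpr hb))
          (by rw [card_pair hab, card_pair hxy])
    rw [hfiber, offDiag_card, card_pair hxy]
  · rintro ⟨a, b⟩ hab
    simp only [coe_filter, mem_product, Set.mem_ofPred_eq] at hab
    obtain ⟨⟨ha, hb⟩, hadj⟩ := hab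
    simp only [coe_filter, mem_powersetCard, Set.mem_ofPred_eq]
    refine ⟨⟨insert_subset ha (singleton_subset_iff.mpr hb), card_pair hadj.ne⟩, ?_⟩
    simp only [mem_insert, mem_singleton]
    rintro x (rfl | rfl) y (rfl | rfl) hxy <;>
      first | exact absurd rfl hxy | exact hadj | exact hadj.symm

variable [Fintype V]

/-- The triple `(a, b, c)` encodes the walk `a - u - b - c`. -/
def nonbacktrackingWalksVia (u : V) : Finset (V × V × V) :=
  univ.filter fun p => G.Adj p.1 u ∧ G.Adj u p.2.1 ∧ G.Adj p.2.1 p.2.2 ∧ p.1 ≠ p.2.1 ∧ p.2.2 ≠ u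

variable {G} in
theorem filter_nonbacktrackingWalksVia_snd_fst_eq {u b : V} (hb : G.Adj u b) :
    (G.nonbacktrackingWalksVia u).filter (fun p => p.2.1 = b) =
      (G.neighborFinset u).erase b ×ˢ {b} ×ˢ (G.neighborFinset b).erase u := by
  ext ⟨a, b', c⟩
  simp only [nonbacktrackingWalksVia, mem_filter, mem_univ, true_and, mem_product, mem_erase,
    mem_neighborFinset, mem_singleton]
  constructor
  · rintro ⟨⟨hau, -, hbc, hab, hcu⟩, rfl⟩
    exact ⟨⟨hab, hau.symm⟩, rfl, hcu, hbc⟩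
  · rintro ⟨⟨hab, hua⟩, rfl, hcu, hbc⟩
    exact ⟨⟨hua.symm, hb, hbc, hab, hcu⟩, rfl⟩

theorem cast_card_nonbacktrackingWalksVia (u : V) :
    (#(G.nonbacktrackingWalksVia u) : ℤ) =
      ∑ b ∈ G.neighborFinset u, ((G.degree b : ℤ) - 1) * ((G.degree u : ℤ) - 1) := by
  rw [card_eq_sum_card_fiberwise (f := fun p => p.2.1) (t := G.neighborFinset u)]
  · push_cast
    refine sum_congr rfl fun b hb => ?_
    have hub : G.Adj u b := (G.mem_neighborFinset u b).mp hb
    rw [filter_nonbacktrackingWalksVia_snd_fst_eq hub, card_product, card_product, card_singleton,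
      one_mul, mul_comm]
    push_cast
    rw [cast_card_erase_of_mem hb, cast_card_erase_of_mem ((G.mem_neighborFinset b u).mpr hub.symm),
      card_neighborFinset_eq_degree, card_neighborFinset_eq_degree]
  · intro p hp
    simp only [nonbacktrackingWalksVia, coe_filter, mem_univ, true_and, Set.mem_ofPred_eq] at hp
    exact (G.mem_neighborFinset _ _).mpr hp.2.1

theorem card_filter_nonbacktrackingWalksVia_fst_eq_snd_snd (u : V) :
    #((G.nonbacktrackingWalksVia u).filter fun p => p.1 = p.2.2) =
      #((G.neighborFinset u ×ˢ G.neighborFinset u).filter fun q => G.Adj q.1 q.2) := by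
  refine card_nbij' (fun p => (p.2.1, p.1)) (fun q => (q.2, q.1, q.2)) ?_ ?_ ?_ ?_
  · rintro ⟨a, b, c⟩ h
    simp only [nonbacktrackingWalksVia, coe_filter, mem_filter, mem_univ, true_and, mem_product,
      mem_neighborFinset, Set.mem_ofPred_eq] at h ⊢
    obtain ⟨⟨hau, hub, hbc, -⟩, rfl⟩ := h
    exact ⟨⟨hub, hau.symm⟩, hbc⟩
  · rintro ⟨b, a⟩ h
    simp only [nonbacktrackingWalksVia, coe_filter, mem_filter, mem_univ, true_and, mem_product,
      mem_neighborFinset, Set.mem_ofPred_eq] at h ⊢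
    obtain ⟨⟨hub, hua⟩, hba⟩ := h
    exact ⟨⟨hua.symm, hub, hba, hba.ne', hua.ne'⟩, trivial⟩
  · rintro ⟨a, b, c⟩ h
    simp only [nonbacktrackingWalksVia, coe_filter, mem_filter, Set.mem_ofPred_eq] at h
    rw [h.2]
  · intro q _
    rfl

end SimpleGraph

/-- The number of 3-edge paths `v0-v1-v2-v3` (four distinct vertices) with
`u = v1` equals `(Σ_{w∈N(u)}(d(w)−1))·(d(u)−1) − 2·T(u)`. -/
theorem three_path_second_vertex_count {V : Type*} [Fintype V] [DecidableEq V]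
    (G : SimpleGraph V) [DecidableRel G.Adj] (u : V) :
    -- 3-edge paths v0-u-v2-v3 with four distinct vertices
    let DM5 : ℕ :=
      ((Finset.univ ×ˢ Finset.univ ×ˢ Finset.univ : Finset (V × V × V)).filter
        (fun p => G.Adj p.1 u ∧ G.Adj u p.2.1 ∧ G.Adj p.2.1 p.2.2 ∧
          p.1 ≠ p.2.1 ∧ p.1 ≠ p.2.2 ∧ p.2.2 ≠ u)).card
    -- T(u): triangles containing u
    let T : ℕ := (((G.neighborFinset u).powersetCard 2).filter
        (fun s => ∀ a ∈ s, ∀ b ∈ s, a ≠ b → G.Adj a b)).card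
    (DM5 : ℤ) = (∑ w ∈ G.neighborFinset u, ((G.degree w : ℤ) - 1))
        * ((G.degree u : ℤ) - 1) - 2 * (T : ℤ) := by
  intro DM5 T
  have hpaths : DM5 = #((G.nonbacktrackingWalksVia u).filter fun p => ¬p.1 = p.2.2) := by
    simp only [DM5, nonbacktrackingWalksVia, univ_product_univ, filter_filter]
    congr 1
    exact filter_congr fun p _ => by tauto
  have hclosed : #((G.nonbacktrackingWalksVia u).filter fun p => p.1 = p.2.2) = 2 * T := by
    rw [card_filter_nonbacktrackingWalksVia_fst_eq_snd_snd, card_filter_adj_product_eq_two_mul]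
    -- the two filters differ only in their decidability instance
    convert rfl
  have hsplit := card_filter_add_card_filter_not (s := G.nonbacktrackingWalksVia u)
    (fun p => p.1 = p.2.2)
  rw [hclosed, ← hpaths] at hsplit
  rw [sum_mul, ← cast_card_nonbacktrackingWalksVia, ← hsplit]
  push_cast
  ring
end

section
/- Let G be a finite simple graph and u a vertex. The number of non-induced 'bowtie' subgraphs in which u is the center (the vertex shared by the two triangles) equals (T(u) choose 2) − D₃(u), where T(u) is the number of triangles containing u and D₃(u) is the number of non-induced diamonds in which u is a degree-3 vertex. -/
/-!
Two distinct triangles through `u` either meet only in `u`, forming a bowtie, or share exactly one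
more vertex `v`; in the latter case they are `uva`, `uvb` with `a ≠ b` common neighbours of `u`
and `v`, i.e. a diamond with chord `uv`. So the pairs of triangles through `u` that are not bowties
are in bijection with these diamonds. Viewing the triangles through `u` as the edges of the link of
`u`, this is the count of paths of length two in a graph by their middle vertex.
-/

open Finset

namespace Finset

variable {α : Type*} [DecidableEq α]

/-- The two pairs `{v, a}`, `{v, b}` of a path `a - v - b`, for `p = {a, b}`. -/
def cherry (v : α) (p : Finset α) : Finset (Finset α) := p.image fun a => {v, a}

lemma cherry_pair (v a b : α) : cherry v {a, b} = {{v, a}, {v, b}} := by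
  simp [cherry, image_insert]

lemma pair_ne_pair_of_ne {v a b : α} (hva : v ≠ a) (hab : a ≠ b) :
    ({v, a} : Finset α) ≠ {v, b} := by
  intro h
  have : a ∈ ({v, b} : Finset α) := h ▸ mem_insert_of_mem (mem_singleton_self a)
  simp_all [eq_comm]

lemma exists_eq_pair_of_mem {s : Finset α} (hs : #s = 2) {x : α} (hx : x ∈ s) :
    ∃ a, s = {x, a} := by
  obtain ⟨a, ha⟩ := card_eq_one.mp (by rw [card_erase_of_mem hx, hs] : #(s.erase x) = 1)
  exact ⟨a, by rw [← ha, insert_erase hx]⟩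

lemma inf_cherry [Fintype α] (v : α) {p : Finset α} (hp : #p = 2) :
    (cherry v p).inf id = {v} := by
  obtain ⟨a, b, hab, rfl⟩ := card_eq_two.mp hp
  rw [cherry_pair, inf_insert, inf_singleton, id, id, inf_eq_inter, ← insert_inter_distrib]
  simp [hab]

lemma sup_cherry (v : α) {p : Finset α} (hp : #p = 2) : (cherry v p).sup id = insert v p := by
  obtain ⟨a, b, hab, rfl⟩ := card_eq_two.mp hp
  rw [cherry_pair, sup_insert, sup_singleton, id, id, sup_eq_union, ← insert_union_distrib]
  rfl

lemma cherry_inj [Fintype α] {v w : α} {p r : Finset α} (hp : #p = 2) (hr : #r = 2)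
    (hv : v ∉ p) (hw : w ∉ r) (h : cherry v p = cherry w r) : v = w ∧ p = r := by
  have hvw : v = w := singleton_injective <| by rw [← inf_cherry v hp, h, inf_cherry w hr]
  subst hvw
  refine ⟨rfl, ?_⟩
  rw [← erase_insert hv, ← erase_insert hw, ← sup_cherry v hp, h, sup_cherry v hr]

variable [Fintype α]

def cherries (S : Finset (Finset α)) : Finset (α × Finset α) :=
  {q ∈ univ ×ˢ univ.powersetCard 2 | ∀ a ∈ q.2, {q.1, a} ∈ S}

lemma mem_cherries {S : Finset (Finset α)} {v : α} {p : Finset α} :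
    (v, p) ∈ cherries S ↔ #p = 2 ∧ ∀ a ∈ p, {v, a} ∈ S := by
  simp [cherries]

lemma notMem_of_mem_cherries {S : Finset (Finset α)} (hS : ∀ s ∈ S, #s = 2) {v : α}
    {p : Finset α} (h : (v, p) ∈ cherries S) : v ∉ p := fun hv => by
  simpa using hS _ ((mem_cherries.mp h).2 v hv)

/-- Two distinct pairs meet in at most one point, which is then the middle of the cherry. -/
theorem card_intersecting_pairs_eq_card_cherries {S : Finset (Finset α)}
    (hS : ∀ s ∈ S, #s = 2) :
    #{t ∈ S.powersetCard 2 | ¬ ∀ s ∈ t, ∀ s' ∈ t, s ≠ s' → s ∩ s' = ∅} = #(cherries S) := by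
  symm
  apply card_bij (fun q _ => cherry q.1 q.2)
  · rintro ⟨v, p⟩ hq
    have hv := notMem_of_mem_cherries hS hq
    obtain ⟨hp, hpS⟩ := mem_cherries.mp hq
    obtain ⟨a, b, hab, rfl⟩ := card_eq_two.mp hp
    have hne : ({v, a} : Finset α) ≠ {v, b} :=
      pair_ne_pair_of_ne (by rintro rfl; exact hv (mem_insert_self v {b})) hab
    simp only [cherry_pair, mem_filter, mem_powersetCard, insert_subset_iff,
      singleton_subset_iff]
    refine ⟨⟨⟨hpS a (by simp), hpS b (by simp)⟩, card_pair hne⟩, fun h => ?_⟩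
    simpa using h {v, a} (by simp) {v, b} (by simp) hne
  · rintro ⟨v, p⟩ hq ⟨w, r⟩ hr h
    obtain ⟨rfl, rfl⟩ := cherry_inj (mem_cherries.mp hq).1 (mem_cherries.mp hr).1
      (notMem_of_mem_cherries hS hq) (notMem_of_mem_cherries hS hr) h
    rfl
  · intro t ht
    simp only [mem_filter, mem_powersetCard] at ht
    obtain ⟨⟨htS, ht⟩, hmeet⟩ := ht
    push Not at hmeet
    obtain ⟨s, hs, s', hs', hss', x, hx⟩ := hmeet
    obtain ⟨a, rfl⟩ := exists_eq_pair_of_mem (hS s (htS hs)) (mem_inter.mp hx).1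
    obtain ⟨b, rfl⟩ := exists_eq_pair_of_mem (hS s' (htS hs')) (mem_inter.mp hx).2
    have hab : a ≠ b := by rintro rfl; exact hss' rfl
    refine ⟨(x, {a, b}), mem_cherries.mpr ⟨card_pair hab, ?_⟩, ?_⟩
    · simp only [mem_insert, mem_singleton, forall_eq_or_imp, forall_eq]
      exact ⟨htS hs, htS hs'⟩
    · refine eq_of_subset_of_card_le ?_ (by rw [ht, cherry_pair, card_pair hss'])
      simp [cherry_pair, insert_subset_iff, hs, hs']

end Finset

namespace SimpleGraph

variable {V : Type*} [Fintype V] [DecidableEq V] (G : SimpleGraph V) [DecidableRel G.Adj]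

/-- The edges of the link of `u`; these are the triangles through `u`, minus `u`. -/
def linkEdges (u : V) : Finset (Finset V) :=
  ((G.neighborFinset u).powersetCard 2).filter fun s => ∀ a ∈ s, ∀ b ∈ s, a ≠ b → G.Adj a b

variable {G}

lemma card_of_mem_linkEdges {u : V} {s : Finset V} (hs : s ∈ G.linkEdges u) : #s = 2 :=
  (mem_powersetCard.mp (mem_filter.mp hs).1).2

lemma pair_mem_linkEdges_iff {u v a : V} :
    {v, a} ∈ G.linkEdges u ↔ G.Adj u v ∧ G.Adj u a ∧ G.Adj v a := by
  simp only [linkEdges, mem_filter, mem_powersetCard, insert_subset_iff, singleton_subset_iff,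
    mem_neighborFinset, mem_insert, mem_singleton, forall_eq_or_imp, forall_eq,
    card_pair_eq_two_iff, ne_eq, not_true_eq_false, false_implies, true_and, and_true]
  constructor
  · rintro ⟨⟨⟨huv, hua⟩, hva⟩, hva', -⟩
    exact ⟨huv, hua, hva' hva⟩
  · rintro ⟨huv, hua, hva⟩
    exact ⟨⟨⟨huv, hua⟩, hva.ne⟩, fun _ => hva, fun _ => hva.symm⟩

variable (G) in
lemma cherries_linkEdges (u : V) :
    cherries (G.linkEdges u) = {q ∈ G.neighborFinset u ×ˢ (univ : Finset V).powersetCard 2 |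
      ∀ a ∈ q.2, G.Adj u a ∧ G.Adj q.1 a} := by
  ext ⟨v, p⟩
  simp only [mem_cherries, pair_mem_linkEdges_iff, mem_filter, mem_product, mem_powersetCard,
    mem_neighborFinset, subset_univ, true_and]
  constructor
  · rintro ⟨hp, h⟩
    obtain ⟨a, ha⟩ := card_pos.mp (by omega : 0 < #p)
    exact ⟨⟨(h a ha).1, hp⟩, fun b hb => (h b hb).2⟩
  · rintro ⟨⟨huv, hp⟩, h⟩
    exact ⟨hp, fun a ha => ⟨huv, h a ha⟩⟩

end SimpleGraph

/-- The number of bowties with center `u` equals `C(T(u),2) − D₃(u)`, where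
`T(u)` is the number of triangles containing `u` and `D₃(u)` is the number of
diamonds in which `u` is a degree-3 (chord) vertex. -/
theorem bowtie_center_count {V : Type*} [Fintype V] [DecidableEq V]
    (G : SimpleGraph V) [DecidableRel G.Adj] (u : V) :
    -- triangles containing u, recorded by their two non-u vertices
    let Tri : Finset (Finset V) := ((G.neighborFinset u).powersetCard 2).filter
        (fun s => ∀ a ∈ s, ∀ b ∈ s, a ≠ b → G.Adj a b)
    -- D₃(u): diamonds with chord (u,v): v ∈ N(u) together with a 2-set of
    -- common neighbors of u and v
    let D3 : ℕ := ((G.neighborFinset u ×ˢ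
        (Finset.univ : Finset V).powersetCard 2).filter
      (fun q => ∀ a ∈ q.2, G.Adj u a ∧ G.Adj q.1 a)).card
    -- bowties centered at u: unordered pairs of triangles through u whose
    -- non-u vertex sets are disjoint
    let Bow : ℕ := ((Tri.powersetCard 2).filter
        (fun t => ∀ s ∈ t, ∀ s' ∈ t, s ≠ s' → s ∩ s' = ∅)).card
    (Bow : ℤ) = (Tri.card.choose 2 : ℤ) - (D3 : ℤ) := by
  intro Tri D3 Bow
  have hsplit : Bow + #{t ∈ Tri.powersetCard 2 | ¬ ∀ s ∈ t, ∀ s' ∈ t, s ≠ s' → s ∩ s' = ∅} =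
      Tri.card.choose 2 := by
    rw [← card_powersetCard]
    exact card_filter_add_card_filter_not _
  have hmeet : #{t ∈ Tri.powersetCard 2 | ¬ ∀ s ∈ t, ∀ s' ∈ t, s ≠ s' → s ∩ s' = ∅} = D3 :=
    (card_intersecting_pairs_eq_card_cherries fun _ => G.card_of_mem_linkEdges).trans
      (congrArg card (G.cherries_linkEdges u))
  omega
end
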